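/- arXiv:2002.10070 — 6 statements merged into one kernel-verified Lean document; each statement's English description precedes it below -/
import Mathlib

section
/- Let V be a finite-dimensional inner product space, E: V → ℝ ∪ {∞} convex, P: V → V an orthogonal projection, η > 0, and λ ∈ V with λ ⊥ ker(I − P) (i.e. λ ∈ (range P)ᗮ). If u⁺ minimizes u ↦ E(u) + ⟨u, λ⟩ + (η/2)‖u − Pw‖² over V for a given w ∈ V, then for all u ∈ V: E(u) ≥ E(u⁺) + ⟨(I − P)(u⁺ − u), λ⟩ + η⟨u⁺ − Pw, u⁺ − u⟩. -/
/-!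
Along the segment `u⁺ + t (u - u⁺)`, `t ∈ (0, 1]`, convexity bounds `E` by the chord, while the
linear-plus-quadratic part of the objective changes by `-t c + t² C`, where `c` is the inner-product
expression of the claim. Minimality of `u⁺` then gives `E u⁺ + c ≤ E u + t C` for every such `t`,
and `t → 0⁺` yields the claim. Since `λ ⊥ range P`, the term `⟨P (u⁺ - u), λ⟩` vanishes.
If `E u⁺ = ⊥` or `E u = ⊤` there is nothing to prove, and minimality excludes the other two
infinite cases.
-/

open scoped RealInnerProductSpace
open Filter Topology

theorem le_of_forall_le_add_mul {a b C : ℝ} (h : ∀ t : ℝ, 0 < t → t ≤ 1 → a ≤ b + t * C) :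
    a ≤ b := by
  have hlim : Tendsto (fun t : ℝ => b + t * C) (𝓝[>] 0) (𝓝 b) :=
    tendsto_nhdsWithin_of_tendsto_nhds <|
      (continuous_const.add (continuous_id.mul continuous_const)).tendsto' 0 b (by simp)
  refine ge_of_tendsto hlim ?_
  filter_upwards [Ioc_mem_nhdsGT one_pos] with t ht using h t ht.1 ht.2

theorem inner_map_eq_zero_of_mem_orthogonal_ker_id_sub {𝕜 V : Type*} [RCLike 𝕜]
    [NormedAddCommGroup V] [InnerProductSpace 𝕜 V] {P : V →ₗ[𝕜] V} (hidem : P ∘ₗ P = P)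
    {lam : V} (hlam : lam ∈ (LinearMap.ker (LinearMap.id - P))ᗮ) (x : V) :
    inner 𝕜 (P x) lam = 0 := by
  have hPx : P x ∈ LinearMap.ker (LinearMap.id - P) := by
    simpa [sub_eq_zero] using (LinearMap.congr_fun hidem x).symm
  exact Submodule.inner_right_of_mem_orthogonal hPx hlam

section Variational

variable {V : Type*} [NormedAddCommGroup V] [InnerProductSpace ℝ V]

theorem linear_add_quadratic_along_segment (lam z x y : V) (η t : ℝ) :
    ⟪x + t • (y - x), lam⟫ + η / 2 * ‖x + t • (y - x) - z‖ ^ 2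
      = ⟪x, lam⟫ + η / 2 * ‖x - z‖ ^ 2
        - t * (⟪x - y, lam⟫ + η * ⟪x - z, x - y⟫) + t ^ 2 * (η / 2 * ‖y - x‖ ^ 2) := by
  have hsplit : x + t • (y - x) - z = (x - z) - t • (x - y) := by module
  rw [hsplit, norm_sub_sq_real, norm_smul, real_inner_smul_right, inner_add_left,
    real_inner_smul_left, ← neg_sub x y, inner_neg_left, norm_neg, Real.norm_eq_abs,
    mul_pow, sq_abs]
  ring

variable {F : V → EReal}
    (hF : ∀ x y : V, ∀ a b : ℝ, 0 ≤ a → 0 ≤ b → a + b = 1 →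
      F (a • x + b • y) ≤ (a : EReal) * F x + (b : EReal) * F y)
    {lam z x : V} {η : ℝ}
    (hmin : ∀ y : V, F x + ((⟪x, lam⟫ + η / 2 * ‖x - z‖ ^ 2 : ℝ) : EReal)
        ≤ F y + ((⟪y, lam⟫ + η / 2 * ‖y - z‖ ^ 2 : ℝ) : EReal))
include hF hmin

theorem variational_inequality_of_eq_coe (y : V) {a b : ℝ} (ha : F x = a) (hb : F y = b) :
    a + (⟪x - y, lam⟫ + η * ⟪x - z, x - y⟫) ≤ b := by
  refine le_of_forall_le_add_mul (C := η / 2 * ‖y - x‖ ^ 2) fun t ht ht1 => ?_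
  have hconv : F (x + t • (y - x)) ≤ (((1 - t) * a + t * b : ℝ) : EReal) := by
    have := hF x y (1 - t) t (by linarith) ht.le (by ring)
    rwa [ha, hb, ← EReal.coe_mul, ← EReal.coe_mul, ← EReal.coe_add,
      show (1 - t) • x + t • y = x + t • (y - x) by module] at this
  have hreal : a + (⟪x, lam⟫ + η / 2 * ‖x - z‖ ^ 2) ≤ ((1 - t) * a + t * b)
      + (⟪x + t • (y - x), lam⟫ + η / 2 * ‖x + t • (y - x) - z‖ ^ 2) := by
    have := (hmin (x + t • (y - x))).trans (add_le_add_left hconv _)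
    rwa [ha, ← EReal.coe_add, ← EReal.coe_add, EReal.coe_le_coe_iff] at this
  rw [linear_add_quadratic_along_segment] at hreal
  have hscaled : t * (a + (⟪x - y, lam⟫ + η * ⟪x - z, x - y⟫))
      ≤ t * (b + t * (η / 2 * ‖y - x‖ ^ 2)) := by linarith
  exact le_of_mul_le_mul_left hscaled ht

theorem variational_inequality (y : V) :
    F x + ((⟪x - y, lam⟫ + η * ⟪x - z, x - y⟫ : ℝ) : EReal) ≤ F y := by
  by_cases hx_bot : F x = ⊥
  · simp [hx_bot]
  by_cases hy_top : F y = ⊤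
  · simp [hy_top]
  have hy_bot : F y ≠ ⊥ := by
    intro h
    have := hmin y
    rw [h, EReal.bot_add, le_bot_iff, EReal.add_eq_bot_iff] at this
    exact this.elim hx_bot (EReal.coe_ne_bot _)
  have hx_top : F x ≠ ⊤ := by
    intro h
    have := hmin y
    rw [h, EReal.top_add_coe, top_le_iff, ← EReal.coe_toReal hy_top hy_bot,
      ← EReal.coe_add] at this
    exact EReal.coe_ne_top _ this
  rw [← EReal.coe_toReal hx_top hx_bot, ← EReal.coe_toReal hy_top hy_bot, ← EReal.coe_add,
    EReal.coe_le_coe_iff]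
  exact variational_inequality_of_eq_coe hF hmin y
    (EReal.coe_toReal hx_top hx_bot).symm (EReal.coe_toReal hy_top hy_bot).symm

end Variational

theorem stmt_2_general {V : Type*} [NormedAddCommGroup V] [InnerProductSpace ℝ V]
    (E : V → EReal)
    (hE : ∀ x y : V, ∀ a b : ℝ, 0 ≤ a → 0 ≤ b → a + b = 1 →
      E (a • x + b • y) ≤ (a : EReal) * E x + (b : EReal) * E y)
    (P : V →ₗ[ℝ] V) (hidem : P ∘ₗ P = P)
    (η : ℝ) (lam : V)
    (hlam : lam ∈ (LinearMap.ker (LinearMap.id - P))ᗮ)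
    (w : V) (uplus : V)
    (hmin : ∀ u : V,
      E uplus + ((⟪uplus, lam⟫ + η / 2 * ‖uplus - P w‖ ^ 2 : ℝ) : EReal)
        ≤ E u + ((⟪u, lam⟫ + η / 2 * ‖u - P w‖ ^ 2 : ℝ) : EReal)) :
    ∀ u : V,
      E uplus + ((⟪(uplus - u) - P (uplus - u), lam⟫
        + η * ⟪uplus - P w, uplus - u⟫ : ℝ) : EReal) ≤ E u := by
  intro u
  rw [inner_sub_left, inner_map_eq_zero_of_mem_orthogonal_ker_id_sub hidem hlam, sub_zero]
  exact variational_inequality hE hmin u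

/-- Lemma 3 (characterization of the u-update): if `λ ⊥ ker(I − P)` and `u⁺` minimizes
`u ↦ E u + ⟨u, λ⟩ + (η/2)‖u − P w‖²`, then for all `u`,
`E u ≥ E u⁺ + ⟨(I − P)(u⁺ − u), λ⟩ + η⟨u⁺ − P w, u⁺ − u⟩`. -/
theorem stmt_2 {V : Type*} [NormedAddCommGroup V] [InnerProductSpace ℝ V]
    [FiniteDimensional ℝ V] (E : V → EReal)
    (hbot : ∀ x : V, E x ≠ ⊥)
    (hE : ∀ x y : V, ∀ a b : ℝ, 0 ≤ a → 0 ≤ b → a + b = 1 →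
      E (a • x + b • y) ≤ (a : EReal) * E x + (b : EReal) * E y)
    (P : V →ₗ[ℝ] V) (hidem : P ∘ₗ P = P)
    (hsym : ∀ x y : V, ⟪P x, y⟫ = ⟪x, P y⟫)
    (η : ℝ) (hη : 0 < η) (lam : V)
    (hlam : lam ∈ (LinearMap.ker (LinearMap.id - P))ᗮ)
    (w : V) (uplus : V)
    (hmin : ∀ u : V,
      E uplus + ((⟪uplus, lam⟫ + η / 2 * ‖uplus - P w‖ ^ 2 : ℝ) : EReal)
        ≤ E u + ((⟪u, lam⟫ + η / 2 * ‖u - P w‖ ^ 2 : ℝ) : EReal)) :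
    ∀ u : V,
      E uplus + ((⟪(uplus - u) - P (uplus - u), lam⟫
        + η * ⟪uplus - P w, uplus - u⟫ : ℝ) : EReal) ≤ E u :=
  stmt_2_general E hE P hidem η lam hlam w uplus hmin
end

section
/- Let V be a finite-dimensional vector space decomposed as V = ⊕ₛ Vₛ where Vₛ are subspaces of functions supported on subdomains Ωₛ of a finite set Ω, and let B: ⊕ₛ Ṽₛ → W be a linear 'jump' operator whose kernel consists exactly of tuples (ũₛ) that agree on all overlaps Γ̃ₛₜ = Ω̃ₛ ∩ Ω̃ₜ. Suppose E: V → ℝ satisfies E(u) = Σₛ Eₛ(u|_{Ω̃ₛ}) whenever the restrictions agree on overlaps. If ũ* = ⊕ₛ ũₛ* minimizes Ẽ(ũ) = Σₛ Eₛ(ũₛ) over {ũ : Bũ = 0}, then the function u* ∈ V obtained by gluing the ũₛ* is well-defined and minimizes E over V. -/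
/-- Theorem 1 (equivalence of the domain-decomposed problem and the original one):
`Ω` is a finite image domain, `tΩ s` are the (covering) essential domains,
`Es s` is a local energy depending only on values on `tΩ s`, and
`E u = Σ_s Es s u`.  If the tuple `ũ*` (with `ũ* s` supported on `tΩ s`) minimizes
`Σ_s Es s (ũ s)` over tuples lying in `ker B`, i.e. agreeing on overlaps, then the
glued function `u*` is well-defined and minimizes `E` over all of `V`. -/
theorem stmt_8 {Ω : Type*} [Fintype Ω] {N : ℕ}
    (tΩ : Fin N → Set Ω)
    (hcover : ∀ x : Ω, ∃ s, x ∈ tΩ s)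
    (Es : Fin N → ((Ω → ℝ) → ℝ))
    (hloc : ∀ s : Fin N, ∀ u v : Ω → ℝ, (∀ x ∈ tΩ s, u x = v x) → Es s u = Es s v)
    (E : (Ω → ℝ) → ℝ)
    (hE : ∀ u : Ω → ℝ, E u = ∑ s : Fin N, Es s u)
    (tustar : Fin N → Ω → ℝ)
    -- ũ* s is supported on tΩ s
    (hsupp : ∀ s : Fin N, ∀ x : Ω, x ∉ tΩ s → tustar s x = 0)
    -- B ũ* = 0 : the local pieces agree on all overlaps
    (hker : ∀ s t : Fin N, ∀ x : Ω, x ∈ tΩ s → x ∈ tΩ t → tustar s x = tustar t x)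
    -- ũ* minimizes Ẽ over the constraint set
    (hmin : ∀ tu : Fin N → Ω → ℝ,
      (∀ s : Fin N, ∀ x : Ω, x ∉ tΩ s → tu s x = 0) →
      (∀ s t : Fin N, ∀ x : Ω, x ∈ tΩ s → x ∈ tΩ t → tu s x = tu t x) →
      ∑ s : Fin N, Es s (tustar s) ≤ ∑ s : Fin N, Es s (tu s)) :
    ∃ ustar : Ω → ℝ,
      (∀ s : Fin N, ∀ x ∈ tΩ s, ustar x = tustar s x) ∧
      (∀ u : Ω → ℝ, E ustar ≤ E u) := by
  refine ⟨fun x => tustar (hcover x).choose x, ?_, ?_⟩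
  · intro s x hx
    exact hker _ s x (hcover x).choose_spec hx
  · intro u
    classical
    set ustar : Ω → ℝ := fun x => tustar (hcover x).choose x with hus
    have hglue : ∀ s, ∀ x ∈ tΩ s, ustar x = tustar s x := fun s x hx =>
      hker _ s x (hcover x).choose_spec hx
    have h1 : E ustar = ∑ s : Fin N, Es s (tustar s) := by
      rw [hE]
      exact Finset.sum_congr rfl fun s _ => hloc s ustar (tustar s) (hglue s)
    set tu : Fin N → Ω → ℝ := fun s x => if x ∈ tΩ s then u x else 0 with htu
    have h2 : ∑ s : Fin N, Es s (tustar s) ≤ ∑ s : Fin N, Es s (tu s) := by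
      apply hmin
      · intro s x hx; simp [htu, hx]
      · intro s t x hs ht; simp [htu, hs, ht]
    have h3 : ∑ s : Fin N, Es s (tu s) = E u := by
      rw [hE]
      refine Finset.sum_congr rfl fun s _ => hloc s (tu s) u ?_
      intro x hx; simp [htu, hx]
    linarith
end

section
/- Let Ω be a finite set partitioned into nonempty disjoint subsets Ω₁, …, Ω_N, let Ω̃ₛ ⊇ Ωₛ be subsets covering Ω, and let Ṽₛ be the space of real functions supported on Ω̃ₛ. Define B: ⊕ₛ Ṽₛ → ⊕_{s<t} ℝ^{Ω̃ₛ∩Ω̃ₜ} by (Bũ)_{st} = ũₛ|_{Ω̃ₛ∩Ω̃ₜ} − ũₜ|_{Ω̃ₛ∩Ω̃ₜ}. Then ũ = (ũ₁,…,ũ_N) ∈ ker B if and only if there exists u: Ω → ℝ with ũₛ = u|_{Ω̃ₛ} for all s; moreover the orthogonal projection P_B onto ker B acts pointwise: if a point x ∈ Ω belongs to exactly k of the sets Ω̃ₛ, then (P_B ũ)ₛ(x) equals the average of the values ũₜ(x) over the k subdomains containing x, for each s with x ∈ Ω̃ₛ. -/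
open scoped Classical

/-- Kernel of the jump operator `B` and pointwise-averaging form of the orthogonal
projection `P_B` onto `ker B`: a tuple of locally supported functions lies in `ker B`
iff it is the tuple of restrictions of a single function, and the orthogonal
projection of `ũ` onto `ker B` is given at each point by the average of the values
over the subdomains containing that point. -/
theorem stmt_9 {Ω : Type*} [Fintype Ω] {N : ℕ}
    (Ωs tΩ : Fin N → Set Ω)
    (hne : ∀ s, (Ωs s).Nonempty)
    (hdisj : ∀ s t, s ≠ t → Disjoint (Ωs s) (Ωs t))
    (hpart : ∀ x : Ω, ∃ s, x ∈ Ωs s)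
    (hsub : ∀ s, Ωs s ⊆ tΩ s)
    (tu : Fin N → Ω → ℝ)
    (hsupp : ∀ s : Fin N, ∀ x : Ω, x ∉ tΩ s → tu s x = 0) :
    -- (i) kernel characterization
    ((∀ s t : Fin N, ∀ x : Ω, x ∈ tΩ s → x ∈ tΩ t → tu s x = tu t x) ↔
      ∃ u : Ω → ℝ, ∀ s : Fin N, tu s = fun x => if x ∈ tΩ s then u x else 0) ∧
    -- (ii) the orthogonal projection onto ker B acts by pointwise averaging
    (∀ p : Fin N → Ω → ℝ,
      (∀ s : Fin N, ∀ x : Ω, x ∉ tΩ s → p s x = 0) →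
      (∀ s t : Fin N, ∀ x : Ω, x ∈ tΩ s → x ∈ tΩ t → p s x = p t x) →
      -- ũ − p is orthogonal to every element of ker B
      (∀ w : Fin N → Ω → ℝ,
        (∀ s : Fin N, ∀ x : Ω, x ∉ tΩ s → w s x = 0) →
        (∀ s t : Fin N, ∀ x : Ω, x ∈ tΩ s → x ∈ tΩ t → w s x = w t x) →
        ∑ s : Fin N, ∑ x : Ω, (tu s x - p s x) * w s x = 0) →
      ∀ s : Fin N, ∀ x : Ω, x ∈ tΩ s →
        p s x = (∑ t ∈ Finset.univ.filter (fun t : Fin N => x ∈ tΩ t), tu t x) /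
          ((Finset.univ.filter (fun t : Fin N => x ∈ tΩ t)).card : ℝ)) := by
  constructor
  · constructor
    · intro h
      refine ⟨fun x => tu (hpart x).choose x, fun s => ?_⟩
      funext x
      by_cases hx : x ∈ tΩ s
      · simp only [hx, if_true]
        exact h s _ x hx (hsub _ (hpart x).choose_spec)
      · simp [hx, hsupp s x hx]
    · rintro ⟨u, hu⟩ s t x hs ht
      rw [hu s, hu t]; simp [hs, ht]
  · intro p hpsupp hpker horth s₀ x₀ hx₀
    classical
    set F := Finset.univ.filter (fun t : Fin N => x₀ ∈ tΩ t) with hF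
    have hs₀F : s₀ ∈ F := by simp [hF, hx₀]
    have hcard : (0:ℝ) < (F.card : ℝ) := by
      exact_mod_cast Finset.card_pos.mpr ⟨s₀, hs₀F⟩
    set w : Fin N → Ω → ℝ := fun t y => if y = x₀ ∧ x₀ ∈ tΩ t then 1 else 0 with hw
    have h1 : ∀ t : Fin N, ∀ y : Ω, y ∉ tΩ t → w t y = 0 := by
      intro t y hy
      simp only [hw, ite_eq_right_iff, and_imp]
      rintro rfl h2
      exact absurd h2 hy
    have h2 : ∀ t t' : Fin N, ∀ y : Ω, y ∈ tΩ t → y ∈ tΩ t' → w t y = w t' y := by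
      intro t t' y ht ht'
      by_cases hy : y = x₀
      · subst hy; simp [hw, ht, ht']
      · simp [hw, hy]
    have horth' := horth w h1 h2
    have key : ∀ s : Fin N, ∑ x : Ω, (tu s x - p s x) * w s x
        = if x₀ ∈ tΩ s then tu s x₀ - p s x₀ else 0 := by
      intro s
      rw [Finset.sum_eq_single x₀]
      · by_cases hs : x₀ ∈ tΩ s <;> simp [hw, hs]
      · intro b _ hb; simp [hw, hb]
      · simp
    rw [Finset.sum_congr rfl (fun s _ => key s)] at horth'
    have heq : ∑ s ∈ Finset.univ.filter (fun s : Fin N => x₀ ∈ tΩ s),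
        (tu s x₀ - p s x₀) = 0 := by
      rw [Finset.sum_filter]; exact horth'
    have hp : ∀ t ∈ F, p t x₀ = p s₀ x₀ := by
      intro t ht
      exact hpker t s₀ x₀ (by simpa [hF] using ht) hx₀
    rw [Finset.sum_sub_distrib] at heq
    have hsum : ∑ t ∈ F, p t x₀ = F.card * p s₀ x₀ := by
      rw [Finset.sum_congr rfl hp, Finset.sum_const, nsmul_eq_mul]
    rw [← hF, hsum] at heq
    field_simp
    linarith [heq]
end

section
/- Let V = ℝ^{M×N} and define the discrete forward gradient ∇⁺u = (D_x⁺u, D_y⁺u) with homogeneous Neumann boundary conditions, where (D_x⁺u)_{ij} = u_{i+1,j} − u_{ij} for i < M and 0 for i = M, and similarly for D_y⁺. Then the operator norm of ∇⁺ (from V with Euclidean norm to V × V with Euclidean norm) satisfies ‖∇⁺‖² ≤ 8. -/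
lemma shift_sq_le (M : ℕ) (u : Fin M → ℝ) :
    ∑ i : Fin M, (if h : (i : ℕ) + 1 < M then (u ⟨(i : ℕ) + 1, h⟩) ^ 2 else 0)
      ≤ ∑ i : Fin M, (u i) ^ 2 := by
  classical
  set s := Finset.univ.filter (fun i : Fin M => (i : ℕ) + 1 < M) with hs
  set f : Fin M → Fin M := fun i => if h : (i : ℕ) + 1 < M then ⟨(i : ℕ) + 1, h⟩ else i with hf
  have h1 : ∑ i : Fin M, (if h : (i : ℕ) + 1 < M then (u ⟨(i : ℕ) + 1, h⟩) ^ 2 else 0)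
      = ∑ i ∈ s, (u (f i)) ^ 2 := by
    rw [hs, Finset.sum_filter]
    refine Finset.sum_congr rfl fun i _ => ?_
    by_cases h : (i : ℕ) + 1 < M <;> simp [hf, h]
  have hinj : ∀ x ∈ s, ∀ y ∈ s, f x = f y → x = y := by
    intro x hx y hy hxy
    simp only [hs, Finset.mem_filter, Finset.mem_univ, true_and] at hx hy
    simp only [hf, dif_pos hx, dif_pos hy, Fin.mk.injEq] at hxy
    exact Fin.ext (by omega)
  rw [h1]
  have h2 : ∑ i ∈ s, (u (f i)) ^ 2 = ∑ k ∈ s.image f, (u k) ^ 2 :=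
    (Finset.sum_image (f := fun k => (u k) ^ 2) hinj).symm
  rw [h2]
  exact Finset.sum_le_sum_of_subset_of_nonneg (Finset.subset_univ _)
    (fun i _ _ => sq_nonneg _)

lemma oneD (M : ℕ) (u : Fin M → ℝ) :
    ∑ i : Fin M, (if h : (i : ℕ) + 1 < M then u ⟨(i : ℕ) + 1, h⟩ - u i else 0) ^ 2
      ≤ 4 * ∑ i : Fin M, (u i) ^ 2 := by
  have h1 : ∀ i : Fin M, (if h : (i : ℕ) + 1 < M then u ⟨(i : ℕ) + 1, h⟩ - u i else 0) ^ 2 ≤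
      2 * (if h : (i : ℕ) + 1 < M then (u ⟨(i : ℕ) + 1, h⟩) ^ 2 else 0) + 2 * (u i) ^ 2 := by
    intro i
    by_cases h : (i : ℕ) + 1 < M
    · simp only [dif_pos h]
      nlinarith [sq_nonneg (u ⟨(i : ℕ) + 1, h⟩ + u i)]
    · simp only [dif_neg h]
      nlinarith [sq_nonneg (u i)]
  calc ∑ i : Fin M, (if h : (i : ℕ) + 1 < M then u ⟨(i : ℕ) + 1, h⟩ - u i else 0) ^ 2
      ≤ ∑ i : Fin M, (2 * (if h : (i : ℕ) + 1 < M then (u ⟨(i : ℕ) + 1, h⟩) ^ 2 else 0)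
          + 2 * (u i) ^ 2) := Finset.sum_le_sum fun i _ => h1 i
    _ = 2 * (∑ i : Fin M, (if h : (i : ℕ) + 1 < M then (u ⟨(i : ℕ) + 1, h⟩) ^ 2 else 0))
          + 2 * ∑ i : Fin M, (u i) ^ 2 := by
        rw [Finset.sum_add_distrib, ← Finset.mul_sum, ← Finset.mul_sum]
    _ ≤ 2 * (∑ i : Fin M, (u i) ^ 2) + 2 * ∑ i : Fin M, (u i) ^ 2 := by
        have := shift_sq_le M u; linarith
    _ = 4 * ∑ i : Fin M, (u i) ^ 2 := by ring

/-- Chambolle's bound `‖∇⁺‖² ≤ 8` for the discrete forward gradient with homogeneous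
Neumann boundary conditions: for every `u : ℝ^{M×N}`,
`‖∇⁺u‖² ≤ 8 ‖u‖²` (Euclidean norms). -/
theorem stmt_10 (M N : ℕ) (u : Fin M → Fin N → ℝ) :
    (∑ i : Fin M, ∑ j : Fin N,
        ((if h : (i : ℕ) + 1 < M then u ⟨(i : ℕ) + 1, h⟩ j - u i j else 0) ^ 2 +
         (if h : (j : ℕ) + 1 < N then u i ⟨(j : ℕ) + 1, h⟩ - u i j else 0) ^ 2))
      ≤ 8 * ∑ i : Fin M, ∑ j : Fin N, (u i j) ^ 2 := by
  have split : (∑ i : Fin M, ∑ j : Fin N,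
        ((if h : (i : ℕ) + 1 < M then u ⟨(i : ℕ) + 1, h⟩ j - u i j else 0) ^ 2 +
         (if h : (j : ℕ) + 1 < N then u i ⟨(j : ℕ) + 1, h⟩ - u i j else 0) ^ 2))
      = (∑ i : Fin M, ∑ j : Fin N,
          (if h : (i : ℕ) + 1 < M then u ⟨(i : ℕ) + 1, h⟩ j - u i j else 0) ^ 2)
        + (∑ i : Fin M, ∑ j : Fin N,
          (if h : (j : ℕ) + 1 < N then u i ⟨(j : ℕ) + 1, h⟩ - u i j else 0) ^ 2) := by
    simp [Finset.sum_add_distrib]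
  have hx : (∑ i : Fin M, ∑ j : Fin N,
        (if h : (i : ℕ) + 1 < M then u ⟨(i : ℕ) + 1, h⟩ j - u i j else 0) ^ 2)
      ≤ 4 * ∑ i : Fin M, ∑ j : Fin N, (u i j) ^ 2 := by
    have hc : (∑ i : Fin M, ∑ j : Fin N, (u i j) ^ 2)
        = ∑ j : Fin N, ∑ i : Fin M, (u i j) ^ 2 := Finset.sum_comm
    rw [Finset.sum_comm, hc, Finset.mul_sum]
    exact Finset.sum_le_sum fun j _ => oneD M (fun i => u i j)
  have hy : (∑ i : Fin M, ∑ j : Fin N,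
        (if h : (j : ℕ) + 1 < N then u i ⟨(j : ℕ) + 1, h⟩ - u i j else 0) ^ 2)
      ≤ 4 * ∑ i : Fin M, ∑ j : Fin N, (u i j) ^ 2 := by
    rw [Finset.mul_sum]
    exact Finset.sum_le_sum fun i _ => oneD N (u i)
  rw [split]
  linarith
end

section
/- Let V be a finite-dimensional inner product space, E: V → ℝ ∪ {∞} convex, P an orthogonal projection on V, η > 0. A pair (u*, λ*) with λ* ⊥ ker(I − P) is a critical point of the saddle point problem min_u max_λ { E(u) + ⟨(I − P)u, λ⟩ + (η/2)‖(I − P)u‖² } if and only if (I − P)u* = 0 and E(u) ≥ E(u*) − ⟨(I − P)(u − u*), λ*⟩ for all u ∈ V. -/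
/-!
At a critical point, maximality in `λ` of the linear term `⟨(I - P)u*, λ⟩` forces
`(I - P)u* = 0`. Then, along the segment from `u*` to `u`, the penalty
`⟨(I - P)·, λ*⟩ + (η/2)‖(I - P)·‖²` at `(1 - t)u* + tu` equals `t a + t² c` with
`a = ⟨(I - P)(u - u*), λ*⟩`, so minimality of `u*` and convexity of `E` give
`E u* ≤ E u + a + t c` for all small `t > 0`; letting `t → 0` yields the variational
inequality. Conversely the inequality dominates the minimality condition because the
quadratic term is nonnegative.
-/

open Filter Topology
open scoped RealInnerProductSpace

theorem le_of_forall_le_add_mul_s13 {r s c : ℝ} (h : ∀ t : ℝ, 0 < t → t < 1 → r ≤ s + t * c) :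
    r ≤ s := by
  have hlim : Tendsto (fun t : ℝ => s + t * c) (𝓝[>] 0) (𝓝 s) := by
    refine tendsto_nhdsWithin_of_tendsto_nhds ?_
    exact (continuous_const.add (continuous_id.mul continuous_const)).tendsto' 0 s (by simp)
  exact ge_of_tendsto hlim <| mem_of_superset (Ioo_mem_nhdsGT one_pos) fun t ht => h t ht.1 ht.2

section ERealConvex

variable {V : Type*} [AddCommGroup V] [Module ℝ V]

/-- Convexity for `EReal`-valued functions; note that `(0 : EReal) * ⊤ = 0`. -/
def ERealConvex (f : V → EReal) : Prop :=
  ∀ x y : V, ∀ a b : ℝ, 0 ≤ a → 0 ≤ b → a + b = 1 →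
    f (a • x + b • y) ≤ (a : EReal) * f x + (b : EReal) * f y

theorem ERealConvex.le_add_of_forall_segment {f : V → EReal} (hbot : ∀ x, f x ≠ ⊥)
    (hf : ERealConvex f) {x y : V} {a c : ℝ}
    (h : ∀ t : ℝ, 0 < t → t ≤ 1 →
      f x ≤ f ((1 - t) • x + t • y) + ((t * a + t ^ 2 * c : ℝ) : EReal)) :
    f x ≤ f y + (a : EReal) := by
  by_cases hy : f y = ⊤
  · rw [hy, EReal.top_add_of_ne_bot (EReal.coe_ne_bot a)]
    exact le_top
  obtain ⟨s, hs⟩ : ∃ s : ℝ, f y = s := ⟨_, (EReal.coe_toReal hy (hbot y)).symm⟩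
  have hx : f x ≠ ⊤ := by
    intro hx
    have := h 1 one_pos le_rfl
    rw [hx, sub_self, zero_smul, one_smul, zero_add, hs, ← EReal.coe_add] at this
    exact EReal.coe_ne_top _ (top_le_iff.mp this)
  obtain ⟨r, hr⟩ : ∃ r : ℝ, f x = r := ⟨_, (EReal.coe_toReal hx (hbot x)).symm⟩
  rw [hr, hs, ← EReal.coe_add, EReal.coe_le_coe_iff]
  refine le_of_forall_le_add_mul_s13 (c := c) fun t ht0 ht1 => ?_
  have hseg : (r : EReal) ≤
      (((1 - t) * r + t * s : ℝ) : EReal) + ((t * a + t ^ 2 * c : ℝ) : EReal) := by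
    refine (hr ▸ h t ht0 ht1.le).trans (add_le_add_left ?_ _)
    simpa only [hr, hs, EReal.coe_add, EReal.coe_mul] using
      hf x y (1 - t) t (by linarith) ht0.le (by ring)
  rw [← EReal.coe_add, EReal.coe_le_coe_iff] at hseg
  exact le_of_mul_le_mul_left (by linarith) ht0

end ERealConvex

theorem eq_zero_of_forall_inner_le {V : Type*} [NormedAddCommGroup V] [InnerProductSpace ℝ V]
    {v μ : V} (h : ∀ lam : V, ⟪v, lam⟫ ≤ ⟪v, μ⟫) : v = 0 := by
  have := h (μ + v)
  rw [inner_add_right] at this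
  exact inner_self_eq_zero.mp (le_antisymm (by linarith) real_inner_self_nonneg)

section FixedPoint

variable {V : Type*} [AddCommGroup V] [Module ℝ V] {P : V →ₗ[ℝ] V} {x : V}

theorem sub_map_sub_of_map_eq (hx : P x = x) (y : V) :
    (y - x) - P (y - x) = y - P y := by
  rw [map_sub, hx]; abel

theorem lineMap_sub_map_of_map_eq (hx : P x = x) (y : V) (t : ℝ) :
    (1 - t) • x + t • y - P ((1 - t) • x + t • y) = t • (y - P y) := by
  rw [map_add, map_smul, map_smul, hx, smul_sub]; abel

end FixedPoint

theorem stmt_13_general {V : Type*} [NormedAddCommGroup V] [InnerProductSpace ℝ V]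
    (E : V → EReal)
    (hbot : ∀ x : V, E x ≠ ⊥)
    (hE : ∀ x y : V, ∀ a b : ℝ, 0 ≤ a → 0 ≤ b → a + b = 1 →
      E (a • x + b • y) ≤ (a : EReal) * E x + (b : EReal) * E y)
    (P : V →ₗ[ℝ] V)
    (η : ℝ) (hη : 0 < η)
    (ustar lamstar : V) :
    -- critical point: u* minimizes L(·, λ*) and λ* maximizes λ ↦ ⟨(I−P)u*, λ⟩
    ((∀ u : V,
        E ustar + ((⟪ustar - P ustar, lamstar⟫
            + η / 2 * ‖ustar - P ustar‖ ^ 2 : ℝ) : EReal)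
          ≤ E u + ((⟪u - P u, lamstar⟫ + η / 2 * ‖u - P u‖ ^ 2 : ℝ) : EReal)) ∧
      (∀ lam : V, ⟪ustar - P ustar, lam⟫ ≤ ⟪ustar - P ustar, lamstar⟫)) ↔
    (ustar - P ustar = 0 ∧
      ∀ u : V, E ustar ≤ E u + ((⟪(u - ustar) - P (u - ustar), lamstar⟫ : ℝ) : EReal)) := by
  constructor
  · rintro ⟨hmin, hmax⟩
    have hv := eq_zero_of_forall_inner_le hmax
    have hfix : P ustar = ustar := (sub_eq_zero.mp hv).symm
    refine ⟨hv, fun u => ?_⟩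
    rw [sub_map_sub_of_map_eq hfix]
    refine ERealConvex.le_add_of_forall_segment hbot hE (c := η / 2 * ‖u - P u‖ ^ 2)
      fun t _ _ => ?_
    have hquad : η / 2 * ‖t • (u - P u)‖ ^ 2 = t ^ 2 * (η / 2 * ‖u - P u‖ ^ 2) := by
      rw [norm_smul, Real.norm_eq_abs, mul_pow, sq_abs]; ring
    have hpt := hmin ((1 - t) • ustar + t • u)
    rwa [hv, inner_zero_left, norm_zero, lineMap_sub_map_of_map_eq hfix, real_inner_smul_left,
      hquad, show (0 + η / 2 * (0 : ℝ) ^ 2) = 0 by ring, EReal.coe_zero, add_zero] at hpt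
  · rintro ⟨hv, hsub⟩
    refine ⟨fun u => ?_, fun lam => by simp [hv]⟩
    have hquad : 0 ≤ η / 2 * ‖u - P u‖ ^ 2 := by positivity
    have hvar := hsub u
    rw [sub_map_sub_of_map_eq (sub_eq_zero.mp hv).symm] at hvar
    rw [hv, inner_zero_left, norm_zero, show (0 + η / 2 * (0 : ℝ) ^ 2) = 0 by ring,
      EReal.coe_zero, add_zero]
    exact hvar.trans (add_le_add_right (EReal.coe_le_coe_iff.mpr (by linarith)) _)

/-- Characterization of critical points of the saddle point problem
`min_u max_λ { E(u) + ⟨(I−P)u, λ⟩ + (η/2)‖(I−P)u‖² }`: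
a pair `(u*, λ*)` with `λ* ⊥ ker(I−P)` is a critical point iff `(I−P)u* = 0` and
`E u ≥ E u* − ⟨(I−P)(u − u*), λ*⟩` for all `u`. -/
theorem stmt_13 {V : Type*} [NormedAddCommGroup V] [InnerProductSpace ℝ V]
    [FiniteDimensional ℝ V] (E : V → EReal)
    (hbot : ∀ x : V, E x ≠ ⊥)
    (hE : ∀ x y : V, ∀ a b : ℝ, 0 ≤ a → 0 ≤ b → a + b = 1 →
      E (a • x + b • y) ≤ (a : EReal) * E x + (b : EReal) * E y)
    (P : V →ₗ[ℝ] V) (hidem : P ∘ₗ P = P)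
    (hsym : ∀ x y : V, ⟪P x, y⟫ = ⟪x, P y⟫)
    (η : ℝ) (hη : 0 < η)
    (ustar lamstar : V)
    (hlam : lamstar ∈ (LinearMap.ker (LinearMap.id - P))ᗮ) :
    -- critical point: u* minimizes L(·, λ*) and λ* maximizes λ ↦ ⟨(I−P)u*, λ⟩
    ((∀ u : V,
        E ustar + ((⟪ustar - P ustar, lamstar⟫
            + η / 2 * ‖ustar - P ustar‖ ^ 2 : ℝ) : EReal)
          ≤ E u + ((⟪u - P u, lamstar⟫ + η / 2 * ‖u - P u‖ ^ 2 : ℝ) : EReal)) ∧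
      (∀ lam : V, ⟪ustar - P ustar, lam⟫ ≤ ⟪ustar - P ustar, lamstar⟫)) ↔
    (ustar - P ustar = 0 ∧
      ∀ u : V, E ustar ≤ E u + ((⟪(u - ustar) - P (u - ustar), lamstar⟫ : ℝ) : EReal)) :=
  stmt_13_general E hbot hE P η hη ustar lamstar
end

section
/- Let Ω = (−1, 1) ⊂ ℝ, g(x) = −1 on (−1,0) and 1 on (0,1), and α > 2. Then u*(x) = 1 on (−1,0), 0 on (0,1) is the unique (a.e.) minimizer over {u ∈ BV(Ω) : 0 ≤ u ≤ 1} of α∫_Ω u g dx + TV_Ω(u), where TV_Ω(u) = sup{ ∫_Ω u p' dx : p ∈ C₀¹(Ω), |p| ≤ 1 }. -/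
/-!
The calibration `p* = 1 - x²` certifies the minimality. Testing the total variation against the
cutoffs `ε φ((1 - x²)/ε - 1) ∈ C₀¹(Ω)` of `p*` and letting `ε → 0` by dominated convergence gives
`TV(u) ≥ ∫ u (p*)'`, hence `En(u) ≥ ∫ u w` with `w = α g + (p*)' = α g - 2x`. Since `α > 2`, `w < 0`
on `(-1, 0)` and `w > 0` on `[0, 1)`, so among `0 ≤ u ≤ 1` the integral `∫ u w` is minimal exactly
at `u = u*`, where it equals `1 - α`. Conversely `∫ u* p' = p(0) ≤ 1` for every test function `p`,
so `En(u*) ≤ 1 - α`.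
-/

open Real Set Filter MeasureTheory Topology

noncomputable section

def smoothRamp (z : ℝ) : ℝ := (z + 1) * smoothTransition z

lemma contDiff_smoothRamp : ContDiff ℝ 1 smoothRamp :=
  (contDiff_id.add contDiff_const).mul smoothTransition.contDiff

lemma smoothRamp_of_nonpos {z : ℝ} (hz : z ≤ 0) : smoothRamp z = 0 := by
  simp [smoothRamp, smoothTransition.zero_of_nonpos hz]

lemma smoothRamp_of_one_le {z : ℝ} (hz : 1 ≤ z) : smoothRamp z = z + 1 := by
  simp [smoothRamp, smoothTransition.one_of_one_le hz]

lemma smoothRamp_nonneg (z : ℝ) : 0 ≤ smoothRamp z := by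
  rcases le_or_gt z 0 with hz | hz
  · exact (smoothRamp_of_nonpos hz).ge
  · exact mul_nonneg (by linarith) (smoothTransition.nonneg z)

lemma smoothRamp_le_of_pos {z : ℝ} (hz : 0 < z) : smoothRamp z ≤ z + 1 :=
  mul_le_of_le_one_right (by linarith) (smoothTransition.le_one z)

lemma deriv_smoothRamp_of_neg {z : ℝ} (hz : z < 0) : deriv smoothRamp z = 0 := by
  have : smoothRamp =ᶠ[𝓝 z] fun _ => 0 :=
    eventually_of_mem (Iio_mem_nhds hz) fun w hw => smoothRamp_of_nonpos (le_of_lt hw)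
  simp [this.deriv_eq]

lemma deriv_smoothRamp_of_one_lt {z : ℝ} (hz : 1 < z) : deriv smoothRamp z = 1 := by
  have : smoothRamp =ᶠ[𝓝 z] fun w => w + 1 :=
    eventually_of_mem (Ioi_mem_nhds hz) fun w hw => smoothRamp_of_one_le (le_of_lt hw)
  simp [this.deriv_eq]

lemma exists_abs_deriv_smoothRamp_le : ∃ M, ∀ z, |deriv smoothRamp z| ≤ M := by
  obtain ⟨M, hM⟩ := (isCompact_Icc (a := (-1 : ℝ)) (b := 2)).exists_bound_of_continuousOn
    (contDiff_smoothRamp.continuous_deriv le_rfl).continuousOn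
  refine ⟨max M 1, fun z => ?_⟩
  by_cases hz : z ∈ Icc (-1 : ℝ) 2
  · exact (hM z hz).trans (le_max_left _ _)
  rcases not_and_or.1 hz with hz | hz
  · simp [deriv_smoothRamp_of_neg (by linarith [not_le.1 hz] : z < 0)]
  · simp [deriv_smoothRamp_of_one_lt (by linarith [not_le.1 hz] : 1 < z)]

/-- Vanishes where `1 - x² ≤ ε` and equals `1 - x²` where `1 - x² ≥ 2ε`. -/
def calibrationApprox (ε x : ℝ) : ℝ := ε * smoothRamp ((1 - x ^ 2) / ε - 1)

section CalibrationApprox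

variable {ε : ℝ}

lemma contDiff_calibrationApprox : ContDiff ℝ 1 (calibrationApprox ε) :=
  contDiff_const.mul (contDiff_smoothRamp.comp (by fun_prop))

lemma calibrationApprox_of_le (hε : 0 < ε) {x : ℝ} (hx : 1 - x ^ 2 ≤ ε) :
    calibrationApprox ε x = 0 := by
  rw [calibrationApprox, smoothRamp_of_nonpos (by rwa [sub_nonpos, div_le_one hε]), mul_zero]

lemma support_calibrationApprox_subset (hε : 0 < ε) :
    Function.support (calibrationApprox ε) ⊆ {x | x ^ 2 ≤ 1 - ε} := fun x hx => by
  by_contra h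
  exact hx (calibrationApprox_of_le hε (by simp only [mem_ofPred_eq, not_le] at h; linarith))

lemma tsupport_calibrationApprox_subset (hε : 0 < ε) :
    tsupport (calibrationApprox ε) ⊆ Ioo (-1) 1 := by
  refine (closure_minimal (support_calibrationApprox_subset hε)
    (isClosed_le (by fun_prop) (by fun_prop))).trans fun x hx => ?_
  simp only [mem_ofPred_eq] at hx
  constructor <;> nlinarith

lemma hasCompactSupport_calibrationApprox (hε : 0 < ε) : HasCompactSupport (calibrationApprox ε) :=
  isCompact_Icc.of_isClosed_subset (isClosed_tsupport _)
    ((tsupport_calibrationApprox_subset hε).trans Ioo_subset_Icc_self)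

lemma abs_calibrationApprox_le_one (hε : 0 < ε) (x : ℝ) : |calibrationApprox ε x| ≤ 1 := by
  rcases le_or_gt (1 - x ^ 2) ε with hx | hx
  · simp [calibrationApprox_of_le hε hx]
  have hz : 0 < (1 - x ^ 2) / ε - 1 := by rw [sub_pos, one_lt_div hε]; exact hx
  have h := smoothRamp_le_of_pos hz
  rw [calibrationApprox, abs_of_nonneg (mul_nonneg hε.le (smoothRamp_nonneg _))]
  calc ε * smoothRamp ((1 - x ^ 2) / ε - 1) ≤ ε * ((1 - x ^ 2) / ε) := by
        gcongr; linarith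
    _ ≤ 1 := by rw [mul_div_cancel₀ _ hε.ne']; nlinarith

lemma deriv_calibrationApprox (hε : 0 < ε) (x : ℝ) :
    deriv (calibrationApprox ε) x = -2 * x * deriv smoothRamp ((1 - x ^ 2) / ε - 1) := by
  have hin : HasDerivAt (fun x : ℝ => (1 - x ^ 2) / ε - 1) (-2 * x / ε) x :=
    ((((hasDerivAt_pow 2 x).const_sub 1).div_const ε).sub_const 1).congr_deriv
      (by push_cast; ring)
  have := ((contDiff_smoothRamp.differentiable one_ne_zero _).hasDerivAt.comp x hin).const_mul ε
  refine this.deriv.trans ?_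
  field_simp

lemma eventually_deriv_calibrationApprox_eq {x : ℝ} (hx : x ∈ Ioo (-1 : ℝ) 1) :
    ∀ᶠ ε in 𝓝[>] 0, deriv (calibrationApprox ε) x = -2 * x := by
  have : 0 < (1 - x ^ 2) / 2 := by nlinarith [hx.1, hx.2]
  filter_upwards [Ioo_mem_nhdsGT this] with ε hε
  rw [deriv_calibrationApprox hε.1, deriv_smoothRamp_of_one_lt, mul_one]
  rw [lt_sub_iff_add_lt, one_add_one_eq_two, lt_div_iff₀ hε.1]
  linarith [hε.2]

end CalibrationApprox

def tvDualSet (Ω : Set ℝ) (u : ℝ → ℝ) : Set ℝ :=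
  {r : ℝ | ∃ p : ℝ → ℝ, ContDiff ℝ 1 p ∧ HasCompactSupport p ∧
    tsupport p ⊆ Ω ∧ (∀ x : ℝ, |p x| ≤ 1) ∧ r = ∫ x in Ω, u x * deriv p x}

lemma tendsto_setIntegral_mul_deriv_calibrationApprox {u : ℝ → ℝ}
    (hu : IntegrableOn u (Ioo (-1) 1)) :
    Tendsto (fun ε => ∫ x in Ioo (-1) 1, u x * deriv (calibrationApprox ε) x) (𝓝[>] 0)
      (𝓝 (∫ x in Ioo (-1) 1, u x * (-2 * x))) := by
  obtain ⟨M, hM⟩ := exists_abs_deriv_smoothRamp_le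
  refine tendsto_integral_filter_of_dominated_convergence (fun x => 2 * M * |u x|) ?_ ?_
    (hu.norm.const_mul _) ?_
  · exact Eventually.of_forall fun ε => hu.aestronglyMeasurable.mul
      (contDiff_calibrationApprox.continuous_deriv le_rfl).aestronglyMeasurable
  · filter_upwards [self_mem_nhdsWithin] with ε (hε : 0 < ε)
    filter_upwards [ae_restrict_mem measurableSet_Ioo] with x hx
    have hx : |x| ≤ 1 := abs_le.2 ⟨hx.1.le, hx.2.le⟩
    calc ‖u x * deriv (calibrationApprox ε) x‖
        = |u x| * (2 * |x| * |deriv smoothRamp ((1 - x ^ 2) / ε - 1)|) := by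
          simp [deriv_calibrationApprox hε]
      _ ≤ |u x| * (2 * 1 * M) := by gcongr; exact hM _
      _ = 2 * M * |u x| := by ring
  · filter_upwards [ae_restrict_mem measurableSet_Ioo] with x hx
    exact tendsto_const_nhds.congr' <|
      (eventually_deriv_calibrationApprox_eq hx).mono fun ε hε => by simp only [hε]

lemma setIntegral_mul_neg_two_mul_le_sSup_tvDualSet {u : ℝ → ℝ}
    (hu : IntegrableOn u (Ioo (-1) 1)) (hBV : BddAbove (tvDualSet (Ioo (-1) 1) u)) :
    ∫ x in Ioo (-1) 1, u x * (-2 * x) ≤ sSup (tvDualSet (Ioo (-1) 1) u) := by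
  refine le_of_tendsto (tendsto_setIntegral_mul_deriv_calibrationApprox hu) ?_
  filter_upwards [self_mem_nhdsWithin] with ε (hε : 0 < ε)
  exact le_csSup hBV ⟨_, contDiff_calibrationApprox, hasCompactSupport_calibrationApprox hε,
    tsupport_calibrationApprox_subset hε, abs_calibrationApprox_le_one hε, rfl⟩

lemma setIntegral_ite_lt_mul {a b c : ℝ} (hcb : c ≤ b) (f : ℝ → ℝ) :
    ∫ x in Ioo a b, (if x < c then 1 else 0) * f x = ∫ x in Ioo a c, f x := by
  have : (fun x => (if x < c then 1 else 0) * f x) = (Iio c).indicator f := by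
    ext x; by_cases hx : x < c <;> simp [hx]
  rw [this, setIntegral_indicator measurableSet_Iio, Ioo_inter_Iio, min_eq_right hcb]

lemma setIntegral_ite_lt_mul_deriv {a b c : ℝ} (hac : a ≤ c) (hcb : c ≤ b) {p : ℝ → ℝ}
    (hp : ContDiff ℝ 1 p) :
    ∫ x in Ioo a b, (if x < c then 1 else 0) * deriv p x = p c - p a := by
  rw [setIntegral_ite_lt_mul hcb, ← integral_Ioc_eq_integral_Ioo,
    ← intervalIntegral.integral_of_le hac]
  exact intervalIntegral.integral_deriv_eq_sub
    (fun x _ => (hp.differentiable one_ne_zero).differentiableAt)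
    ((hp.continuous_deriv le_rfl).intervalIntegrable _ _)

lemma sSup_tvDualSet_ite_lt_le_one {a b c : ℝ} (hc : c ∈ Ioo a b) :
    sSup (tvDualSet (Ioo a b) fun x => if x < c then 1 else 0) ≤ 1 := by
  refine csSup_le ⟨0, 0, contDiff_const, HasCompactSupport.zero, by simp, by simp, by simp⟩ ?_
  rintro _ ⟨p, hp, -, hsupp, hp1, rfl⟩
  have hpa : p a = 0 := image_eq_zero_of_notMem_tsupport fun ha => (hsupp ha).1.false
  rw [setIntegral_ite_lt_mul_deriv hc.1.le hc.2.le hp, hpa, sub_zero]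
  exact (le_abs_self _).trans (hp1 c)

lemma integrableOn_Ioo_of_mem_Icc {a b : ℝ} {u : ℝ → ℝ} (hu : Measurable u)
    (hb : ∀ x ∈ Ioo a b, 0 ≤ u x ∧ u x ≤ 1) : IntegrableOn u (Ioo a b) :=
  Measure.integrableOn_of_bounded measure_Ioo_lt_top.ne hu.aestronglyMeasurable (M := 1) <| by
    filter_upwards [ae_restrict_mem measurableSet_Ioo] with x hx
    rw [Real.norm_eq_abs, abs_le]
    exact ⟨by linarith [(hb x hx).1], (hb x hx).2⟩

def weight (α x : ℝ) : ℝ := α * (if x < 0 then -1 else 1) - 2 * x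

lemma setIntegral_mul_weight (α : ℝ) {u : ℝ → ℝ} (hu : IntegrableOn u (Ioo (-1) 1)) :
    ∫ x in Ioo (-1) 1, u x * weight α x =
      α * (∫ x in Ioo (-1) 1, u x * (if x < 0 then -1 else 1)) +
        ∫ x in Ioo (-1) 1, u x * (-2 * x) := by
  have hsign : IntegrableOn (fun x => u x * (if x < 0 then -1 else 1)) (Ioo (-1) 1) :=
    hu.mul_bdd (c := 1) (measurable_const.ite measurableSet_Iio measurable_const).aestronglyMeasurable
      (Eventually.of_forall fun x => by split_ifs <;> norm_num)
  have hlin : IntegrableOn (fun x => u x * (-2 * x)) (Ioo (-1) 1) :=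
    hu.mul_bdd (c := 2) (by fun_prop) <| by
      filter_upwards [ae_restrict_mem measurableSet_Ioo] with x hx
      rw [Real.norm_eq_abs, abs_le]
      constructor <;> linarith [hx.1, hx.2]
  rw [← integral_const_mul, ← integral_add (hsign.const_mul α) hlin]
  congr 1 with x
  simp only [weight]
  ring

lemma setIntegral_ite_lt_mul_sign :
    ∫ x in Ioo (-1 : ℝ) 1, (if x < 0 then 1 else 0) * (if x < 0 then -1 else 1) = (-1 : ℝ) := by
  rw [setIntegral_ite_lt_mul zero_le_one, setIntegral_congr_fun measurableSet_Ioo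
    (g := fun _ => -1) fun x hx => if_pos hx.2]
  simp

lemma setIntegral_ite_lt_mul_weight (α : ℝ) :
    ∫ x in Ioo (-1) 1, (if x < 0 then 1 else 0) * weight α x = 1 - α := by
  rw [setIntegral_ite_lt_mul zero_le_one, setIntegral_congr_fun measurableSet_Ioo
    (g := fun x => -α - 2 * x) fun x hx => by simp [weight, hx.2],
    ← integral_Ioc_eq_integral_Ioo, ← intervalIntegral.integral_of_le (by norm_num)]
  rw [intervalIntegral.integral_sub intervalIntegrable_const
    (intervalIntegral.intervalIntegrable_id.const_mul 2), intervalIntegral.integral_const,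
    intervalIntegral.integral_const_mul, integral_id]
  norm_num
  ring

lemma weight_ne_zero {α x : ℝ} (hα : 2 < α) (hx : x ∈ Ioo (-1) 1) : weight α x ≠ 0 := by
  unfold weight
  split_ifs <;> linarith [hx.1, hx.2]

lemma ite_lt_mul_weight_le {α x v : ℝ} (hα : 2 < α) (hx : x ∈ Ioo (-1) 1)
    (hv : 0 ≤ v ∧ v ≤ 1) : (if x < 0 then 1 else 0) * weight α x ≤ v * weight α x := by
  unfold weight
  split_ifs with h
  · nlinarith [hx.1]
  · nlinarith [hx.2, not_lt.1 h]

lemma integrableOn_mul_weight (α : ℝ) {u : ℝ → ℝ} (hu : IntegrableOn u (Ioo (-1) 1)) :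
    IntegrableOn (fun x => u x * weight α x) (Ioo (-1) 1) := by
  refine hu.mul_bdd (c := |α| + 2) ?_ ?_
  · exact ((measurable_const.mul (measurable_const.ite measurableSet_Iio measurable_const)).sub
      (by fun_prop)).aestronglyMeasurable
  · filter_upwards [ae_restrict_mem measurableSet_Ioo] with x hx
    rw [Real.norm_eq_abs, weight, abs_le]
    split_ifs <;> constructor <;> linarith [neg_abs_le α, le_abs_self α, hx.1, hx.2]

end

/-- The counterexample (Example 1): on `Ω = (−1, 1)` with `g = −1` on `(−1,0)` and
`1` on `(0,1)`, and `α > 2`, the function `u* = 1` on `(−1,0)`, `0` on `(0,1)` is the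
unique (up to a.e. equality) minimizer over `{u ∈ BV(Ω) : 0 ≤ u ≤ 1}` of
`α∫_Ω u g + TV_Ω(u)`, where `TV_Ω(u) = sup { ∫_Ω u p' : p ∈ C₀¹(Ω), |p| ≤ 1 }`. -/
theorem stmt_16 (α : ℝ) (hα : 2 < α) :
    let Ω : Set ℝ := Set.Ioo (-1 : ℝ) 1
    let g : ℝ → ℝ := fun x => if x < 0 then -1 else 1
    let ustar : ℝ → ℝ := fun x => if x < 0 then 1 else 0
    -- the dual set defining the total variation on Ω
    let DS : (ℝ → ℝ) → Set ℝ := fun u =>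
      {r : ℝ | ∃ p : ℝ → ℝ, ContDiff ℝ 1 p ∧ HasCompactSupport p ∧
        tsupport p ⊆ Ω ∧ (∀ x : ℝ, |p x| ≤ 1) ∧ r = ∫ x in Ω, u x * deriv p x}
    let TV : (ℝ → ℝ) → ℝ := fun u => sSup (DS u)
    let En : (ℝ → ℝ) → ℝ := fun u => α * (∫ x in Ω, u x * g x) + TV u
    ∀ u : ℝ → ℝ, Measurable u →
      (∀ x ∈ Ω, 0 ≤ u x ∧ u x ≤ 1) →
      -- u ∈ BV(Ω): the dual set is bounded above
      BddAbove (DS u) →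
      En ustar ≤ En u ∧ (En u ≤ En ustar → ∀ᵐ x ∂(volume.restrict Ω), u x = ustar x) := by
  intro Ω g ustar DS TV En u hu hb hBV
  have hu_int : IntegrableOn u Ω := integrableOn_Ioo_of_mem_Icc hu hb
  have hustar_int : IntegrableOn ustar Ω :=
    integrableOn_Ioo_of_mem_Icc (measurable_const.ite measurableSet_Iio measurable_const)
      fun x _ => by by_cases hx : x < 0 <;> simp [ustar, hx]
  have hEn_ustar : En ustar ≤ 1 - α := by
    have hTV := sSup_tvDualSet_ite_lt_le_one (show (0 : ℝ) ∈ Ioo (-1) 1 by norm_num)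
    change α * (∫ x in Ω, ustar x * g x) + sSup (tvDualSet Ω ustar) ≤ 1 - α
    rw [setIntegral_ite_lt_mul_sign]
    linarith
  have hEn_u : ∫ x in Ω, u x * weight α x ≤ En u := by
    rw [setIntegral_mul_weight α hu_int]
    exact add_le_add_right (setIntegral_mul_neg_two_mul_le_sSup_tvDualSet hu_int hBV) _
  have hmono : ∀ᵐ x ∂(volume.restrict Ω), ustar x * weight α x ≤ u x * weight α x := by
    filter_upwards [ae_restrict_mem measurableSet_Ioo] with x hx
    exact ite_lt_mul_weight_le hα hx (hb x hx)
  have hJ_ustar : ∫ x in Ω, ustar x * weight α x = 1 - α := setIntegral_ite_lt_mul_weight α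
  have hJ_mono : ∫ x in Ω, ustar x * weight α x ≤ ∫ x in Ω, u x * weight α x :=
    integral_mono_ae (integrableOn_mul_weight α hustar_int) (integrableOn_mul_weight α hu_int) hmono
  refine ⟨?_, fun hle => ?_⟩
  · calc En ustar ≤ 1 - α := hEn_ustar
      _ = ∫ x in Ω, ustar x * weight α x := hJ_ustar.symm
      _ ≤ ∫ x in Ω, u x * weight α x := hJ_mono
      _ ≤ En u := hEn_u
  have hae := (integral_eq_iff_of_ae_le (integrableOn_mul_weight α hustar_int)
    (integrableOn_mul_weight α hu_int) hmono).1 (by linarith)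
  filter_upwards [hae, ae_restrict_mem measurableSet_Ioo] with x hx hxΩ
  exact (mul_left_inj' (weight_ne_zero hα hxΩ)).1 hx.symm
end
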